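/- arXiv:1812.07656 — 2 statements merged into one kernel-verified Lean document; each statement's English description precedes it below -/
import Mathlib

section
/- A closed symmetric monoidal category V is *-autonomous if and only if it is equipped with a full and faithful functor (−)* : Vᵒᵖ → V together with a natural isomorphism V(A ⊗ B, C*) ≅ V(A, (B ⊗ C)*). -/
open CategoryTheory MonoidalCategory MonoidalClosed Opposite

universe u v

/-! The functor `X ↦ X ⊸ D` is adjoint to itself on the right, `(− ⊸ D)ᵒᵖ ⊣ (− ⊸ D)`, with
counit the canonical map `A ⟶ (A ⊸ D) ⊸ D`; so `D` is dualizing exactly when `− ⊸ D` is fully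
faithful, and `− ⊸ D` always carries a natural isomorphism
`Hom(A ⊗ B, X ⊸ D) ≅ Hom(A, (B ⊗ X) ⊸ D)`.
Conversely, given `(−)*` and such an isomorphism, taking `X = 𝟙` shows that `X*` represents
`A ↦ Hom(A ⊗ X, 𝟙*)`, naturally in `X`; hence `(−)* ≅ − ⊸ 𝟙*`, and `𝟙*` is dualizing. -/

namespace CategoryTheory.MonoidalClosed

section Braided

variable {C : Type u} [Category.{v} C] [MonoidalCategory C] [BraidedCategory C]

def tensorShuffle (A B X : C) : (B ⊗ X) ⊗ A ≅ X ⊗ (A ⊗ B) :=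
  β_ (B ⊗ X) A ≪≫ (α_ A B X).symm ≪≫ β_ (A ⊗ B) X

section Shuffle

variable {A A' B B' X X' : C}

lemma tensorShuffle_hom_naturality_left (a : A' ⟶ A) :
    (B ⊗ X) ◁ a ≫ (tensorShuffle A B X).hom = (tensorShuffle A' B X).hom ≫ X ◁ a ▷ B := by
  simp only [tensorShuffle, Iso.trans_hom, Iso.symm_hom, Category.assoc]
  rw [BraidedCategory.braiding_naturality_right_assoc, associator_inv_naturality_left_assoc,
    BraidedCategory.braiding_naturality_left]

lemma tensorShuffle_hom_naturality_middle (b : B' ⟶ B) :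
    (b ▷ X) ▷ A ≫ (tensorShuffle A B X).hom = (tensorShuffle A B' X).hom ≫ X ◁ A ◁ b := by
  simp only [tensorShuffle, Iso.trans_hom, Iso.symm_hom, Category.assoc]
  rw [BraidedCategory.braiding_naturality_left_assoc, associator_inv_naturality_middle_assoc,
    BraidedCategory.braiding_naturality_left]

lemma tensorShuffle_hom_naturality_right (x : X' ⟶ X) :
    (B ◁ x) ▷ A ≫ (tensorShuffle A B X).hom = (tensorShuffle A B X').hom ≫ x ▷ (A ⊗ B) := by
  simp only [tensorShuffle, Iso.trans_hom, Iso.symm_hom, Category.assoc]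
  rw [BraidedCategory.braiding_naturality_left_assoc, associator_inv_naturality_right_assoc,
    BraidedCategory.braiding_naturality_right]

end Shuffle

variable [MonoidalClosed C]

def dual (D : C) : Cᵒᵖ ⥤ C where
  obj X := (ihom X.unop).obj D
  map f := (pre f.unop).app D

def toDoubleDual (D A : C) : A ⟶ (ihom ((ihom A).obj D)).obj D :=
  curry ((β_ ((ihom A).obj D) A).hom ≫ (ihom.ev A).app D)

def dualTranspose (D : C) {A X : C} (k : X ⟶ (ihom A).obj D) : A ⟶ (ihom X).obj D :=
  curry ((β_ X A).hom ≫ uncurry k)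

lemma dualTranspose_comp (D : C) {A X X' : C} (g : X' ⟶ X) (k : X ⟶ (ihom A).obj D) :
    dualTranspose D (g ≫ k) = dualTranspose D k ≫ (pre g).app D := by
  rw [dualTranspose, dualTranspose, uncurry_natural_left, curry_pre_app,
    BraidedCategory.braiding_naturality_left_assoc]

lemma dualTranspose_id (D A : C) : dualTranspose D (𝟙 ((ihom A).obj D)) = toDoubleDual D A := by
  rw [dualTranspose, uncurry_id_eq_ev, toDoubleDual]

def dualTensorHomEquiv (D A B X : C) :
    (A ⊗ B ⟶ (ihom X).obj D) ≃ (A ⟶ (ihom (B ⊗ X)).obj D) where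
  toFun g := curry ((tensorShuffle A B X).hom ≫ uncurry g)
  invFun h := curry ((tensorShuffle A B X).inv ≫ uncurry h)
  left_inv g := by simp
  right_inv h := by simp

variable {D A A' B B' X X' : C}

lemma dualTensorHomEquiv_whiskerRight_comp (a : A' ⟶ A) (g : A ⊗ B ⟶ (ihom X).obj D) :
    dualTensorHomEquiv D A' B X (a ▷ B ≫ g) = a ≫ dualTensorHomEquiv D A B X g := by
  simp only [dualTensorHomEquiv, Equiv.coe_fn_mk, uncurry_natural_left, ← curry_natural_left]
  rw [← Category.assoc _ (tensorShuffle A B X).hom, tensorShuffle_hom_naturality_left,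
    Category.assoc]

lemma dualTensorHomEquiv_whiskerLeft_comp (b : B' ⟶ B) (g : A ⊗ B ⟶ (ihom X).obj D) :
    dualTensorHomEquiv D A B' X (A ◁ b ≫ g) =
      dualTensorHomEquiv D A B X g ≫ (pre (b ▷ X)).app D := by
  simp only [dualTensorHomEquiv, Equiv.coe_fn_mk, uncurry_natural_left, curry_pre_app]
  rw [← Category.assoc _ (tensorShuffle A B X).hom, tensorShuffle_hom_naturality_middle,
    Category.assoc]

lemma dualTensorHomEquiv_comp_pre (x : X' ⟶ X) (g : A ⊗ B ⟶ (ihom X).obj D) :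
    dualTensorHomEquiv D A B X' (g ≫ (pre x).app D) =
      dualTensorHomEquiv D A B X g ≫ (pre (B ◁ x)).app D := by
  simp only [dualTensorHomEquiv, Equiv.coe_fn_mk, uncurry_pre_app, curry_pre_app]
  rw [← Category.assoc _ (tensorShuffle A B X).hom, tensorShuffle_hom_naturality_right,
    Category.assoc]

end Braided

section OfHomEquiv

variable {C : Type u} [Category.{v} C] [MonoidalCategory C]
  {S : Cᵒᵖ ⥤ C} {e : ∀ A B X : C, (A ⊗ B ⟶ S.obj (op X)) ≃ (A ⟶ S.obj (op (B ⊗ X)))}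
  (hA : ∀ (A A' B X : C) (a : A' ⟶ A) (g : A ⊗ B ⟶ S.obj (op X)),
    e A' B X (a ▷ B ≫ g) = a ≫ e A B X g)
  (hB : ∀ (A B B' X : C) (b : B' ⟶ B) (g : A ⊗ B ⟶ S.obj (op X)),
    e A B' X (A ◁ b ≫ g) = e A B X g ≫ S.map (b ▷ X).op)

include hA in
lemma homEquiv_symm_comp {A A' B X : C} (a : A' ⟶ A) (h : A ⟶ S.obj (op (B ⊗ X))) :
    (e A' B X).symm (a ≫ h) = a ▷ B ≫ (e A B X).symm h := by
  rw [Equiv.symm_apply_eq, hA, Equiv.apply_symm_apply]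

include hB in
lemma homEquiv_symm_comp_map {A B B' X : C} (b : B' ⟶ B) (h : A ⟶ S.obj (op (B ⊗ X))) :
    (e A B' X).symm (h ≫ S.map (b ▷ X).op) = A ◁ b ≫ (e A B X).symm h := by
  rw [Equiv.symm_apply_eq, hB, Equiv.apply_symm_apply]

variable (S e) in
def evalOfHomEquiv (X : C) : S.obj (op X) ⊗ X ⟶ S.obj (op (𝟙_ C)) :=
  (e _ X (𝟙_ C)).symm (S.map (ρ_ X).hom.op)

include hA hB in
lemma evalOfHomEquiv_naturality {X Y : C} (f : Y ⟶ X) :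
    S.map f.op ▷ Y ≫ evalOfHomEquiv S e Y = S.obj (op X) ◁ f ≫ evalOfHomEquiv S e X := by
  rw [evalOfHomEquiv, evalOfHomEquiv, ← homEquiv_symm_comp hA, ← homEquiv_symm_comp_map hB,
    ← S.map_comp, ← S.map_comp, ← op_comp, ← op_comp, rightUnitor_naturality]

variable [BraidedCategory C] [MonoidalClosed C]

variable (S e) in
def toIhomOfHomEquiv (X : C) : S.obj (op X) ⟶ (ihom X).obj (S.obj (op (𝟙_ C))) :=
  curry ((β_ (S.obj (op X)) X).inv ≫ evalOfHomEquiv S e X)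

variable (S e) in
def ofIhomOfHomEquiv (X : C) : (ihom X).obj (S.obj (op (𝟙_ C))) ⟶ S.obj (op X) :=
  e _ X (𝟙_ C) ((β_ _ X).hom ≫ (ihom.ev X).app _) ≫ S.map (ρ_ X).inv.op

include hA

lemma ofIhomOfHomEquiv_whiskerRight_evalOfHomEquiv (X : C) :
    ofIhomOfHomEquiv S e X ▷ X ≫ evalOfHomEquiv S e X = (β_ _ X).hom ≫ (ihom.ev X).app _ := by
  rw [evalOfHomEquiv, ← homEquiv_symm_comp hA, ofIhomOfHomEquiv, Category.assoc, ← S.map_comp,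
    ← op_comp, Iso.hom_inv_id, op_id, S.map_id, Category.comp_id, Equiv.symm_apply_apply]

lemma ofIhomOfHomEquiv_comp_toIhomOfHomEquiv (X : C) :
    ofIhomOfHomEquiv S e X ≫ toIhomOfHomEquiv S e X = 𝟙 _ := by
  rw [toIhomOfHomEquiv, ← curry_natural_left, BraidedCategory.braiding_inv_naturality_right_assoc,
    ofIhomOfHomEquiv_whiskerRight_evalOfHomEquiv hA, Iso.inv_hom_id_assoc,
    ← uncurry_id_eq_ev, curry_uncurry]

lemma toIhomOfHomEquiv_comp_ofIhomOfHomEquiv (X : C) :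
    toIhomOfHomEquiv S e X ≫ ofIhomOfHomEquiv S e X = 𝟙 _ := by
  have h_eval : toIhomOfHomEquiv S e X ▷ X ≫ (β_ _ X).hom ≫ (ihom.ev X).app _ =
      evalOfHomEquiv S e X := by
    rw [BraidedCategory.braiding_naturality_left_assoc, ← uncurry_eq, toIhomOfHomEquiv,
      uncurry_curry, Iso.hom_inv_id_assoc]
  rw [ofIhomOfHomEquiv, ← Category.assoc, ← hA, h_eval, evalOfHomEquiv, Equiv.apply_symm_apply,
    ← S.map_comp, ← op_comp, Iso.inv_hom_id, op_id, S.map_id]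

include hB

lemma toIhomOfHomEquiv_naturality {X Y : C} (f : Y ⟶ X) :
    S.map f.op ≫ toIhomOfHomEquiv S e Y =
      toIhomOfHomEquiv S e X ≫ (pre f).app (S.obj (op (𝟙_ C))) := by
  apply uncurry_injective
  rw [uncurry_natural_left, uncurry_pre_app, toIhomOfHomEquiv, toIhomOfHomEquiv, uncurry_curry,
    uncurry_curry, BraidedCategory.braiding_inv_naturality_right_assoc,
    BraidedCategory.braiding_inv_naturality_left_assoc, evalOfHomEquiv_naturality hA hB]

def isoDualOfHomEquiv : S ≅ dual (S.obj (op (𝟙_ C))) :=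
  NatIso.ofComponents
    (fun X => ⟨toIhomOfHomEquiv S e X.unop, ofIhomOfHomEquiv S e X.unop,
      toIhomOfHomEquiv_comp_ofIhomOfHomEquiv hA X.unop,
      ofIhomOfHomEquiv_comp_toIhomOfHomEquiv hA X.unop⟩)
    (fun f => toIhomOfHomEquiv_naturality hA hB f.unop)

end OfHomEquiv

section Symmetric

variable {C : Type u} [Category.{v} C] [MonoidalCategory C] [SymmetricCategory C]
  [MonoidalClosed C]

lemma dualTranspose_dualTranspose (D : C) {A X : C} (k : X ⟶ (ihom A).obj D) :
    dualTranspose D (dualTranspose D k) = k := by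
  simp [dualTranspose]

def dualAdjunction (D : C) : (dual D).rightOp ⊣ dual D :=
  Adjunction.mkOfHomEquiv
    { homEquiv _ _ :=
        { toFun k := dualTranspose D k.unop
          invFun h := (dualTranspose D h).op
          left_inv k := Quiver.Hom.unop_inj (dualTranspose_dualTranspose D k.unop)
          right_inv h := dualTranspose_dualTranspose D h }
      homEquiv_naturality_left_symm f g :=
        congrArg Quiver.Hom.op (dualTranspose_comp D f g)
      homEquiv_naturality_right f g := dualTranspose_comp D g.unop f.unop }

lemma dualAdjunction_counit_app (D A : C) :
    (dualAdjunction D).counit.app (op A) = (toDoubleDual D A).op := by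
  simp only [dualAdjunction, Adjunction.mkOfHomEquiv]
  exact congrArg Quiver.Hom.op (dualTranspose_id D A)

theorem dual_full_and_faithful_iff (D : C) :
    ((dual D).Full ∧ (dual D).Faithful) ↔ ∀ A, IsIso (toDoubleDual D A) := by
  constructor
  · rintro ⟨_, _⟩ A
    have : IsIso (toDoubleDual D A).op := by
      rw [← dualAdjunction_counit_app]
      exact NatIso.isIso_app_of_isIso _ _
    exact isIso_of_op _
  · intro h
    have : ∀ Y, IsIso ((dualAdjunction D).counit.app Y) := fun Y => by
      rw [dualAdjunction_counit_app]
      have := h Y.unop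
      exact isIso_op _
    have : IsIso (dualAdjunction D).counit := NatIso.isIso_of_isIso_app _
    have ff := (dualAdjunction D).fullyFaithfulROfIsIsoCounit
    exact ⟨ff.full, ff.faithful⟩

end Symmetric

end CategoryTheory.MonoidalClosed

/-- A closed symmetric monoidal category `C` is *-autonomous (has a dualizing object `D`
with the canonical map `A ⟶ (A ⊸ D) ⊸ D` invertible for all `A`) if and only if it is
equipped with a full and faithful functor `(−)* : Cᵒᵖ ⥤ C` together with a natural
isomorphism `Hom(A ⊗ B, X*) ≅ Hom(A, (B ⊗ X)*)`. -/
theorem star_autonomous_iff_dualization {C : Type u} [Category.{v} C] [MonoidalCategory C]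
    [SymmetricCategory C] [MonoidalClosed C] :
    (∃ D : C, ∀ A : C,
      IsIso (MonoidalClosed.curry ((β_ ((ihom A).obj D) A).hom ≫ (ihom.ev A).app D)))
    ↔
    ∃ S : Cᵒᵖ ⥤ C, S.Full ∧ S.Faithful ∧
      ∃ e : ∀ A B X : C, (A ⊗ B ⟶ S.obj (op X)) ≃ (A ⟶ S.obj (op (B ⊗ X))),
        (∀ (A A' B X : C) (a : A' ⟶ A) (g : A ⊗ B ⟶ S.obj (op X)),
          e A' B X (a ▷ B ≫ g) = a ≫ e A B X g) ∧
        (∀ (A B B' X : C) (b : B' ⟶ B) (g : A ⊗ B ⟶ S.obj (op X)),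
          e A B' X (A ◁ b ≫ g) = e A B X g ≫ S.map (b ▷ X).op) ∧
        (∀ (A B X X' : C) (x : X' ⟶ X) (g : A ⊗ B ⟶ S.obj (op X)),
          e A B X' (g ≫ S.map x.op) = e A B X g ≫ S.map (B ◁ x).op) := by
  constructor
  · rintro ⟨D, hD⟩
    obtain ⟨hFull, hFaithful⟩ := (dual_full_and_faithful_iff D).2 hD
    exact ⟨dual D, hFull, hFaithful, dualTensorHomEquiv D,
      fun _ _ _ _ => dualTensorHomEquiv_whiskerRight_comp,
      fun _ _ _ _ => dualTensorHomEquiv_whiskerLeft_comp,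
      fun _ _ _ _ => dualTensorHomEquiv_comp_pre⟩
  · rintro ⟨S, hFull, hFaithful, e, hA, hB, -⟩
    let iso := isoDualOfHomEquiv hA hB
    exact ⟨S.obj (op (𝟙_ C)), (dual_full_and_faithful_iff _).1
      ⟨Functor.Full.of_iso iso, Functor.Faithful.of_iso iso⟩⟩
end

section
/- Let C be a category with pullbacks, F, G endofunctors on C, and suppose G preserves weak pullbacks. If f : (A,α) → (C,γ) and g : (B,β) → (C,γ) are (F,G)-dialgebra homomorphisms, then the pullback A ×_C B of the underlying morphisms f, g in C carries a dialgebra structure making both projections dialgebra homomorphisms (hence yields an (F,G)-bisimulation between (A,α) and (B,β)). -/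
open CategoryTheory

universe v u

variable {C : Type u} [Category.{v} C]

/-- An `(F,G)`-dialgebra: an object `A` together with `α : F A ⟶ G A`. -/
structure Dialgebra (F G : C ⥤ C) : Type max u v where
  carrier : C
  str : F.obj carrier ⟶ G.obj carrier

/-- A homomorphism of `(F,G)`-dialgebras: a morphism of carriers commuting with the
structure morphisms. -/
structure DialgHom {F G : C ⥤ C} (A B : Dialgebra F G) : Type v where
  hom : A.carrier ⟶ B.carrier
  comm : A.str ≫ G.map hom = F.map hom ≫ B.str

theorem DialgHom.ext' {F G : C ⥤ C} {A B : Dialgebra F G} {f g : DialgHom A B}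
    (h : f.hom = g.hom) : f = g := by
  cases f; cases g; cases h; rfl

/-- The category of `(F,G)`-dialgebras. -/
instance dialgebraCategory (F G : C ⥤ C) : Category (Dialgebra F G) where
  Hom A B := DialgHom A B
  id A := ⟨𝟙 A.carrier, by simp⟩
  comp f g := ⟨f.hom ≫ g.hom, by
    simp only [Functor.map_comp, Category.assoc]
    rw [reassoc_of% f.comm, g.comm]⟩
  id_comp _ := DialgHom.ext' (Category.id_comp _)
  comp_id _ := DialgHom.ext' (Category.comp_id _)
  assoc _ _ _ := DialgHom.ext' (Category.assoc _ _ _)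

/-- A commuting square is a weak pullback: every competing cone factors through it
(not necessarily uniquely). -/
def IsWeakPullbackSq {P X Y Z : C} (fst : P ⟶ X) (snd : P ⟶ Y) (f : X ⟶ Z) (g : Y ⟶ Z) :
    Prop :=
  fst ≫ f = snd ≫ g ∧
    ∀ {W : C} (h : W ⟶ X) (k : W ⟶ Y), h ≫ f = k ≫ g →
      ∃ l : W ⟶ P, l ≫ fst = h ∧ l ≫ snd = k

/-- If `G` preserves weak pullbacks, then for dialgebra homomorphisms
`f : (A,α) → (D,δ)` and `g : (B,β) → (D,δ)` the pullback of the underlying morphisms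
carries a dialgebra structure making both projections dialgebra homomorphisms, i.e.
it yields an `(F,G)`-bisimulation between `(A,α)` and `(B,β)`. -/
theorem dialg_pullback_bisimulation [Limits.HasPullbacks C] (F G : C ⥤ C)
    (hG : ∀ {P X Y Z : C} (fst : P ⟶ X) (snd : P ⟶ Y) (f : X ⟶ Z) (g : Y ⟶ Z),
      IsPullback fst snd f g →
        IsWeakPullbackSq (G.map fst) (G.map snd) (G.map f) (G.map g))
    {A B D : Dialgebra F G} (f : A ⟶ D) (g : B ⟶ D) :
    ∃ ρ : F.obj (Limits.pullback f.hom g.hom) ⟶ G.obj (Limits.pullback f.hom g.hom),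
      (ρ ≫ G.map (Limits.pullback.fst f.hom g.hom) =
        F.map (Limits.pullback.fst f.hom g.hom) ≫ A.str) ∧
      (ρ ≫ G.map (Limits.pullback.snd f.hom g.hom) =
        F.map (Limits.pullback.snd f.hom g.hom) ≫ B.str) := by
  obtain ⟨_, hfac⟩ := hG _ _ _ _
    (IsPullback.of_hasPullback f.hom g.hom)
  obtain ⟨ρ, h1, h2⟩ := hfac (F.map (Limits.pullback.fst f.hom g.hom) ≫ A.str)
    (F.map (Limits.pullback.snd f.hom g.hom) ≫ B.str) (by
      rw [Category.assoc, Category.assoc, f.comm, g.comm,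
        ← Category.assoc, ← Category.assoc, ← F.map_comp, ← F.map_comp,
        Limits.pullback.condition])
  exact ⟨ρ, h1, h2⟩
end
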